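/- arXiv:0903.4846 — 2 statements merged into one kernel-verified Lean document; each statement's English description precedes it below -/
import Mathlib

section
/- Let D be an intersection of finitely many closed disks of common radius r > 0 in E^2 with nonempty interior. Then D is a fat disk-polygon (the pairwise distances between the centers of the generating disks are at most r) if and only if every center of a closed disk of radius r containing D belongs to D. -/
open Metric Set

/-- A disk-polygon `D` (intersection of finitely many closed disks of radius `r` with
nonempty interior) is fat (pairwise distances of the generating centers at most `r`) if and
only if the center of every closed disk of radius `r` containing `D` belongs to `D`. -/
theorem fat_disk_polygon_iff (N : ℕ) (r : ℝ) (hr : 0 < r)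
    (c : Fin N → EuclideanSpace ℝ (Fin 2))
    (D : Set (EuclideanSpace ℝ (Fin 2))) (hD : D = ⋂ i, closedBall (c i) r)
    (hint : (interior D).Nonempty) :
    (∀ i j : Fin N, dist (c i) (c j) ≤ r) ↔ (∀ x, D ⊆ closedBall x r → x ∈ D) := by
  constructor
  · intro h x hx
    rw [hD]
    refine mem_iInter.2 fun i => ?_
    have hci : c i ∈ D := by
      rw [hD]
      exact mem_iInter.2 fun j => mem_closedBall.2 (h i j)
    have := hx hci
    rw [mem_closedBall] at this ⊢
    rwa [dist_comm]
  · intro h i j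
    have hcj : c j ∈ D := h (c j) (by rw [hD]; exact iInter_subset _ j)
    rw [hD] at hcj
    have := mem_iInter.1 hcj i
    rw [mem_closedBall] at this
    rwa [dist_comm]
end

section
/- If q = (q_1,...,q_N) is a contraction of p = (p_1,...,p_N) in E^n, then there is an analytic contraction of p to q in E^{2n}: a motion p(t), t ∈ [0,1], in E^{2n} with analytic coordinate functions, p(0) = (p, 0), p(1) = (q, 0) (under the embedding E^n × {0} ⊆ E^{2n}), and each pairwise distance ‖p_i(t) − p_j(t)‖ monotone non-increasing in t. -/
/-!
With `θ = π t / 2`, the motion `(cos θ • x, sin θ • y)` in `Eⁿ × Eⁿ` has squared pairwise distances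
`cos² θ * ‖pᵢ - pⱼ‖² + sin² θ * ‖qᵢ - qⱼ‖²`, which decrease in `θ` when `q` is a contraction of `p`.
Its end point is `(0, q)` rather than `(q, 0)`; applying at each time the isometric reflection
`(u, v) ↦ (cos θ • u + sin θ • v, sin θ • u - cos θ • v)` fixes this without changing any distance,
and gives the motion `ι₁ (cos² θ • x + sin² θ • y) + ι₂ ((cos θ * sin θ) • (x - y))`, where
`ι₁, ι₂ : Eⁿ → E²ⁿ` embed into the two orthogonal blocks of coordinates.
-/

open Set

/-- The canonical inclusion of `Eⁿ` into `Eᵐ` (for `n ≤ m`), extending by zero coordinates. -/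
def euclInclusion (n m : ℕ) (x : EuclideanSpace ℝ (Fin n)) : EuclideanSpace ℝ (Fin m) :=
  WithLp.toLp 2 (fun j => if h : (j : ℕ) < n then x ⟨j, h⟩ else 0)

open Real
open scoped InnerProductSpace

section LeapfrogMotion

variable {E F : Type*} [NormedAddCommGroup E] [InnerProductSpace ℝ E]
  [NormedAddCommGroup F] [InnerProductSpace ℝ F]

theorem norm_sq_add_norm_sq_leapfrog {c s : ℝ} (hcs : c ^ 2 + s ^ 2 = 1) (u v : E) :
    ‖c ^ 2 • u + s ^ 2 • v‖ ^ 2 + ‖(c * s) • (u - v)‖ ^ 2 = c ^ 2 * ‖u‖ ^ 2 + s ^ 2 * ‖v‖ ^ 2 := by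
  simp only [norm_add_sq_real, norm_sub_sq_real, norm_smul, mul_pow, real_inner_smul_left,
    real_inner_smul_right, Real.norm_eq_abs, sq_abs]
  linear_combination (c ^ 2 * ‖u‖ ^ 2 + s ^ 2 * ‖v‖ ^ 2) * hcs

noncomputable def leapfrogMotion (ι₁ ι₂ : E →ₗᵢ[ℝ] F) (x y : E) (θ : ℝ) : F :=
  ι₁ (cos θ ^ 2 • x + sin θ ^ 2 • y) + ι₂ ((cos θ * sin θ) • (x - y))

variable (ι₁ ι₂ : E →ₗᵢ[ℝ] F)

@[simp]
theorem leapfrogMotion_zero (x y : E) : leapfrogMotion ι₁ ι₂ x y 0 = ι₁ x := by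
  simp [leapfrogMotion]

@[simp]
theorem leapfrogMotion_pi_div_two (x y : E) : leapfrogMotion ι₁ ι₂ x y (π / 2) = ι₁ y := by
  simp [leapfrogMotion]

theorem analyticAt_leapfrogMotion (x y : E) (θ : ℝ) :
    AnalyticAt ℝ (leapfrogMotion ι₁ ι₂ x y) θ :=
  ((ι₁.toContinuousLinearMap.analyticAt _).comp (by fun_prop)).add
    ((ι₂.toContinuousLinearMap.analyticAt _).comp (by fun_prop))

theorem dist_leapfrogMotion_sq (horth : ∀ a b, ⟪ι₁ a, ι₂ b⟫_ℝ = 0) (x y x' y' : E) (θ : ℝ) :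
    dist (leapfrogMotion ι₁ ι₂ x y θ) (leapfrogMotion ι₁ ι₂ x' y' θ) ^ 2 =
      cos θ ^ 2 * dist x x' ^ 2 + sin θ ^ 2 * dist y y' ^ 2 := by
  have hdiff : leapfrogMotion ι₁ ι₂ x y θ - leapfrogMotion ι₁ ι₂ x' y' θ =
      ι₁ (cos θ ^ 2 • (x - x') + sin θ ^ 2 • (y - y')) +
        ι₂ ((cos θ * sin θ) • ((x - x') - (y - y'))) := by
    rw [leapfrogMotion, leapfrogMotion, add_sub_add_comm, ← map_sub, ← map_sub]
    congr 2 <;> module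
  rw [dist_eq_norm, hdiff, norm_add_sq_real, horth, mul_zero, add_zero,
    LinearIsometry.norm_map, LinearIsometry.norm_map,
    norm_sq_add_norm_sq_leapfrog (cos_sq_add_sin_sq θ), dist_eq_norm, dist_eq_norm]

theorem antitoneOn_dist_leapfrogMotion (horth : ∀ a b, ⟪ι₁ a, ι₂ b⟫_ℝ = 0) {x y x' y' : E}
    (hxy : dist y y' ≤ dist x x') :
    AntitoneOn (fun θ => dist (leapfrogMotion ι₁ ι₂ x y θ) (leapfrogMotion ι₁ ι₂ x' y' θ))
      (Icc 0 (π / 2)) := by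
  intro a ha b hb hab
  have hcos : cos b ^ 2 ≤ cos a ^ 2 := pow_le_pow_left₀
    (cos_nonneg_of_mem_Icc ⟨by linarith [pi_pos, hb.1], hb.2⟩)
    (cos_le_cos_of_nonneg_of_le_pi ha.1 (by linarith [pi_pos, hb.2]) hab) 2
  have hdist : dist y y' ^ 2 ≤ dist x x' ^ 2 := pow_le_pow_left₀ dist_nonneg hxy 2
  rw [← pow_le_pow_iff_left₀ dist_nonneg dist_nonneg two_ne_zero,
    dist_leapfrogMotion_sq ι₁ ι₂ horth, dist_leapfrogMotion_sq ι₁ ι₂ horth, sin_sq, sin_sq]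
  nlinarith

end LeapfrogMotion

section EuclideanBlocks

theorem Fin.sum_univ_two_mul {M : Type*} [AddCommMonoid M] (n : ℕ) (f : Fin (2 * n) → M) :
    ∑ j, f j = ∑ a : Fin n, f ⟨a, by omega⟩ + ∑ a : Fin n, f ⟨n + a, by omega⟩ := by
  rw [← Fin.sum_congr' f (two_mul n).symm, Fin.sum_univ_add]
  rfl

def euclInclusionSnd (n : ℕ) (x : EuclideanSpace ℝ (Fin n)) : EuclideanSpace ℝ (Fin (2 * n)) :=
  WithLp.toLp 2 (fun j => if h : n ≤ (j : ℕ) then x ⟨j - n, by omega⟩ else 0)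

def euclInclusionₗ (n m : ℕ) : EuclideanSpace ℝ (Fin n) →ₗ[ℝ] EuclideanSpace ℝ (Fin m) where
  toFun := euclInclusion n m
  map_add' x y := by ext j; by_cases h : (j : ℕ) < n <;> simp [euclInclusion, h]
  map_smul' c x := by ext j; by_cases h : (j : ℕ) < n <;> simp [euclInclusion, h]

def euclInclusionSndₗ (n : ℕ) :
    EuclideanSpace ℝ (Fin n) →ₗ[ℝ] EuclideanSpace ℝ (Fin (2 * n)) where
  toFun := euclInclusionSnd n
  map_add' x y := by ext j; by_cases h : n ≤ (j : ℕ) <;> simp [euclInclusionSnd, h]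
  map_smul' c x := by ext j; by_cases h : n ≤ (j : ℕ) <;> simp [euclInclusionSnd, h]

theorem inner_euclInclusion {n m : ℕ} (hnm : n ≤ m) (x y : EuclideanSpace ℝ (Fin n)) :
    ⟪euclInclusion n m x, euclInclusion n m y⟫_ℝ = ⟪x, y⟫_ℝ := by
  obtain ⟨k, rfl⟩ := Nat.exists_eq_add_of_le hnm
  simp [euclInclusion, PiLp.inner_apply, Fin.sum_univ_add]

theorem inner_euclInclusionSnd (n : ℕ) (x y : EuclideanSpace ℝ (Fin n)) :
    ⟪euclInclusionSnd n x, euclInclusionSnd n y⟫_ℝ = ⟪x, y⟫_ℝ := by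
  have hfst (a : Fin n) : ¬ n ≤ (a : ℕ) := not_le.mpr a.isLt
  rw [PiLp.inner_apply, PiLp.inner_apply, Fin.sum_univ_two_mul]
  simp [euclInclusionSnd, hfst]

theorem inner_euclInclusion_euclInclusionSnd (n : ℕ) (x y : EuclideanSpace ℝ (Fin n)) :
    ⟪euclInclusion n (2 * n) x, euclInclusionSnd n y⟫_ℝ = 0 := by
  rw [PiLp.inner_apply]
  refine Finset.sum_eq_zero fun j _ => ?_
  by_cases h : (j : ℕ) < n
  · simp [euclInclusionSnd, euclInclusion, h, not_le.mpr h]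
  · simp [euclInclusion, h]

noncomputable def euclInclusionₗᵢ {n m : ℕ} (hnm : n ≤ m) :
    EuclideanSpace ℝ (Fin n) →ₗᵢ[ℝ] EuclideanSpace ℝ (Fin m) :=
  (euclInclusionₗ n m).isometryOfInner (inner_euclInclusion hnm)

noncomputable def euclInclusionSndₗᵢ (n : ℕ) :
    EuclideanSpace ℝ (Fin n) →ₗᵢ[ℝ] EuclideanSpace ℝ (Fin (2 * n)) :=
  (euclInclusionSndₗ n).isometryOfInner (inner_euclInclusionSnd n)

@[simp]
theorem euclInclusionₗᵢ_apply {n m : ℕ} (hnm : n ≤ m) (x : EuclideanSpace ℝ (Fin n)) :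
    euclInclusionₗᵢ hnm x = euclInclusion n m x :=
  rfl

end EuclideanBlocks

/-- The leapfrog lemma: if `q` is a contraction of `p` in `Eⁿ`, then there is an analytic
contraction of `p` to `q` within `E^{2n}`: an analytic motion starting at `p`, ending at `q`
(both embedded in `E^{2n}`), with all pairwise distances monotone non-increasing. -/
theorem exists_analytic_contraction (n N : ℕ)
    (p q : Fin N → EuclideanSpace ℝ (Fin n))
    (hcontr : ∀ i j : Fin N, i < j → dist (q i) (q j) ≤ dist (p i) (p j)) :
    ∃ P : ℝ → Fin N → EuclideanSpace ℝ (Fin (2 * n)),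
      (∀ i, AnalyticOn ℝ (fun t => P t i) (Icc 0 1)) ∧
      (∀ i, P 0 i = euclInclusion n (2 * n) (p i)) ∧
      (∀ i, P 1 i = euclInclusion n (2 * n) (q i)) ∧
      (∀ i j : Fin N, i < j → AntitoneOn (fun t => dist (P t i) (P t j)) (Icc 0 1)) := by
  set ι₁ := euclInclusionₗᵢ (show n ≤ 2 * n by omega)
  set ι₂ := euclInclusionSndₗᵢ n
  have horth : ∀ a b, ⟪ι₁ a, ι₂ b⟫_ℝ = 0 := inner_euclInclusion_euclInclusionSnd n
  have hscale : MapsTo (fun t : ℝ => π / 2 * t) (Icc 0 1) (Icc 0 (π / 2)) := fun t ht =>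
    ⟨by nlinarith [pi_pos, ht.1], by nlinarith [pi_pos, ht.2]⟩
  refine ⟨fun t i => leapfrogMotion ι₁ ι₂ (p i) (q i) (π / 2 * t), fun i t _ => ?_,
    fun i => by simp [ι₁], fun i => by simp [ι₁], fun i j hij => ?_⟩
  · exact ((analyticAt_leapfrogMotion ι₁ ι₂ _ _ _).comp (by fun_prop)).analyticWithinAt
  · exact (antitoneOn_dist_leapfrogMotion ι₁ ι₂ horth (hcontr i j hij)).comp_MonotoneOn
      (fun a _ b _ hab => by nlinarith [pi_pos]) hscale
end
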